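/- arXiv:2208.04042 — 4 statements merged into one kernel-verified Lean document; each statement's English description precedes it below -/
import Mathlib

section
/- The IFS {x/5, (x+3)/5, (x+4)/5} on ℝ satisfies the open set condition but not the strong separation condition. -/
open Set Metric

noncomputable section

abbrev Pt (d : ℕ) := EuclideanSpace ℝ (Fin d)

/-- `f` is a similitude with ratio `r`. -/
def IsSimilitude {X : Type*} [MetricSpace X] (f : X → X) (r : ℝ) : Prop :=
  ∀ x y, dist (f x) (f y) = r * dist x y

/-- `E` is the attractor of the IFS `φ`. -/
def IsAttractor {X : Type*} [MetricSpace X] {ι : Type*} (φ : ι → X → X) (E : Set X) : Prop :=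
  IsCompact E ∧ E.Nonempty ∧ E = ⋃ i, φ i '' E

/-- Strong separation condition. -/
def SSC {X : Type*} [MetricSpace X] {ι : Type*} (φ : ι → X → X) (E : Set X) : Prop :=
  Pairwise fun i j => Disjoint (φ i '' E) (φ j '' E)

/-- Open set condition. -/
def OSC {X : Type*} [MetricSpace X] {ι : Type*} (φ : ι → X → X) : Prop :=
  ∃ U : Set X, U.Nonempty ∧ IsOpen U ∧ (∀ i, φ i '' U ⊆ U) ∧
    Pairwise fun i j => Disjoint (φ i '' U) (φ j '' U)

/-- Adjacency: images of the attractor intersect. -/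
def Adj {X : Type*} [MetricSpace X] {ι : Type*} (φ : ι → X → X) (E : Set X) (i j : ι) : Prop :=
  (φ i '' E ∩ φ j '' E).Nonempty

/-- `Λ` is a connected component of the index set with respect to the
equivalence generated by the adjacency relation. -/
def IsComponent {X : Type*} [MetricSpace X] {ι : Type*} (φ : ι → X → X) (E : Set X)
    (Λ : Set ι) : Prop :=
  ∃ i, Λ = {j | Relation.ReflTransGen (Adj φ E) i j}

open Classical in
/-- The `n`-th entry of the characteristic vector of an IFS with contraction
ratios `r` and similarity dimension `s`. -/
def gammaVec {X : Type*} [MetricSpace X] {ι : Type*} [Fintype ι] (φ : ι → X → X) (E : Set X)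
    (r : ι → ℝ) (s : ℝ) (n : ℕ) : ℝ :=
  ∑ Λ : Finset ι, if IsComponent φ E ↑Λ ∧ Λ.card = n then ∑ i ∈ Λ, r i ^ s else 0

/-- The strict order on eventually zero sequences. -/
def Prec (x y : ℕ → ℝ) : Prop :=
  ∃ m, x m < y m ∧ ∀ n > m, x n = y n

def PrecLe (x y : ℕ → ℝ) : Prop := Prec x y ∨ x = y

theorem example_145_osc_not_ssc (E : Set ℝ) (hcomp : IsCompact E) (hne : E.Nonempty)
    (hE : E = (fun x : ℝ => x / 5) '' E ∪ (fun x : ℝ => (x + 3) / 5) '' E ∪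
      (fun x : ℝ => (x + 4) / 5) '' E) :
    OSC ![fun x : ℝ => x / 5, fun x : ℝ => (x + 3) / 5, fun x : ℝ => (x + 4) / 5] ∧
    ¬ SSC ![fun x : ℝ => x / 5, fun x : ℝ => (x + 3) / 5, fun x : ℝ => (x + 4) / 5] E := by
  constructor
  · -- OSC with U = Ioo 0 1
    refine ⟨Ioo 0 1, ⟨1/2, by norm_num⟩, isOpen_Ioo, ?_, ?_⟩
    · intro i
      fin_cases i <;>
        simp only [Fin.mk_zero, Fin.mk_one, Matrix.cons_val_zero, Matrix.cons_val_one,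
          Matrix.head_cons, Matrix.cons_val_two, Matrix.tail_cons, Fin.isValue, Fin.reduceFinMk] <;>
      · rintro x ⟨a, ⟨ha0, ha1⟩, rfl⟩
        constructor <;> simp only [] <;> linarith
    · intro i j hij
      rw [Set.disjoint_left]
      rintro x ⟨a, ⟨ha0, ha1⟩, rfl⟩ ⟨b, ⟨hb0, hb1⟩, hab⟩
      fin_cases i <;> fin_cases j <;>
        simp only [Fin.mk_zero, Fin.mk_one, Matrix.cons_val_zero, Matrix.cons_val_one,
          Matrix.head_cons, Matrix.cons_val_two, Matrix.tail_cons, Fin.isValue, Fin.reduceFinMk] at hij hab <;>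
        first
        | exact hij rfl
        | linarith
  · -- ¬ SSC : 0 ∈ E, 1 ∈ E and φ₁ 1 = φ₂ 0 = 4/5
    obtain ⟨x₀, hx₀⟩ := hne
    have h0 : ∀ x ∈ E, x / 5 ∈ E := fun x hx => by
      rw [hE]; exact Or.inl (Or.inl ⟨x, hx, rfl⟩)
    have h2 : ∀ x ∈ E, (x + 4) / 5 ∈ E := fun x hx => by
      rw [hE]; exact Or.inr ⟨x, hx, rfl⟩
    have hclosed := hcomp.isClosed
    have hpow : Filter.Tendsto (fun n : ℕ => ((1:ℝ)/5) ^ n) Filter.atTop (nhds 0) :=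
      tendsto_pow_atTop_nhds_zero_of_lt_one (by norm_num) (by norm_num)
    have hzero : (0:ℝ) ∈ E := by
      have hmem : ∀ n : ℕ, x₀ * (1/5:ℝ) ^ n ∈ E := by
        intro n
        induction n with
        | zero => simpa using hx₀
        | succ n ih =>
          have := h0 _ ih
          have heq : x₀ * (1/5:ℝ) ^ (n+1) = x₀ * (1/5:ℝ) ^ n / 5 := by ring
          rw [heq]; exact this
      have ht : Filter.Tendsto (fun n : ℕ => x₀ * (1/5:ℝ) ^ n) Filter.atTop (nhds 0) := by
        simpa using hpow.const_mul x₀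
      exact hclosed.mem_of_tendsto ht (Filter.Eventually.of_forall hmem)
    have hone : (1:ℝ) ∈ E := by
      have hmem : ∀ n : ℕ, 1 + (x₀ - 1) * (1/5:ℝ) ^ n ∈ E := by
        intro n
        induction n with
        | zero => simpa using hx₀
        | succ n ih =>
          have := h2 _ ih
          have heq : 1 + (x₀ - 1) * (1/5:ℝ) ^ (n+1)
              = ((1 + (x₀ - 1) * (1/5:ℝ) ^ n) + 4) / 5 := by ring
          rw [heq]; exact this
      have ht : Filter.Tendsto (fun n : ℕ => 1 + (x₀ - 1) * (1/5:ℝ) ^ n)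
          Filter.atTop (nhds 1) := by
        have := (hpow.const_mul (x₀ - 1)).const_add 1
        simpa using this
      exact hclosed.mem_of_tendsto ht (Filter.Eventually.of_forall hmem)
    intro hssc
    have hdisj := hssc (show (1 : Fin 3) ≠ 2 by decide)
    simp only [Matrix.cons_val_one, Matrix.head_cons, Matrix.cons_val_two, Matrix.tail_cons,
      Fin.isValue, Set.disjoint_left] at hdisj
    exact hdisj (a := (4:ℝ)/5) ⟨1, hone, by norm_num⟩ ⟨0, hzero, by norm_num⟩
end
end

section
/- Let Φ and Ψ be IFSs of similitudes generating the same attractor E. If for every connected component Λ of the index set of Ψ (with respect to the relation j ∼ k iff ψ_j(E) ∩ ψ_k(E) ≠ ∅) and every index i of Φ, the set {i} × Λ is a connected component of the index set of Φ∘Ψ (with respect to the analogous relation for Φ∘Ψ), then Φ satisfies the strong separation condition. -/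
open Set Metric

noncomputable section

theorem components_stable_implies_ssc {d N M : ℕ} (hN : 1 < N) (hM : 1 < M)
    (φ : Fin N → Pt d → Pt d) (ψ : Fin M → Pt d → Pt d)
    (ρ : Fin N → ℝ) (r : Fin M → ℝ)
    (hρ : ∀ i, 0 < ρ i ∧ ρ i < 1) (hr : ∀ j, 0 < r j ∧ r j < 1)
    (hφ : ∀ i, IsSimilitude (φ i) (ρ i)) (hψ : ∀ j, IsSimilitude (ψ j) (r j))
    (E : Set (Pt d)) (hEφ : IsAttractor φ E) (hEψ : IsAttractor ψ E)
    (h : ∀ Λ : Set (Fin M), IsComponent ψ E Λ → ∀ i : Fin N,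
      IsComponent (fun p : Fin N × Fin M => φ p.1 ∘ ψ p.2) E (({i} : Set (Fin N)) ×ˢ Λ)) :
    SSC φ E := by
  intro i i' hne
  by_contra hdis
  rw [Set.not_disjoint_iff_nonempty_inter] at hdis
  obtain ⟨x, ⟨y, hy, hxy⟩, ⟨y', hy', hxy'⟩⟩ := hdis
  obtain ⟨-, -, hE⟩ := hEψ
  have hy2 : y ∈ ⋃ j, ψ j '' E := hE ▸ hy
  have hy2' : y' ∈ ⋃ j, ψ j '' E := hE ▸ hy'
  obtain ⟨j, z, hz, hzy⟩ := by simpa using hy2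
  obtain ⟨j', z', hz', hzy'⟩ := by simpa using hy2'
  obtain ⟨p₀, hcomp⟩ := h {k | Relation.ReflTransGen (Adj ψ E) j k} ⟨j, rfl⟩ i
  have hmem : (i, j) ∈ ({i} : Set (Fin N)) ×ˢ {k | Relation.ReflTransGen (Adj ψ E) j k} :=
    ⟨rfl, Relation.ReflTransGen.refl⟩
  rw [hcomp] at hmem
  have hadj : Adj (fun p : Fin N × Fin M => φ p.1 ∘ ψ p.2) E (i, j) (i', j') := by
    refine ⟨x, ⟨z, hz, ?_⟩, ⟨z', hz', ?_⟩⟩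
    · simp [hzy, hxy]
    · simp [hzy', hxy']
  have hmem' : (i', j') ∈ ({i} : Set (Fin N)) ×ˢ {k | Relation.ReflTransGen (Adj ψ E) j k} := by
    rw [hcomp]
    exact hmem.tail hadj
  exact hne hmem'.1.symm
end
end

section
/- Let Φ = {φ_i}_{i=1}^N and Ψ = {ψ_j}_{j=1}^M be IFSs of similitudes on ℝ^d, both satisfying the open set condition and generating the same self-similar set E. If Φ does not satisfy the strong separation condition, then γ(Ψ) ≺ γ(Φ∘Ψ), where γ denotes the characteristic vector and ≺ the order on eventually-zero sequences defined by x ≺ y iff ∃m: x_m < y_m and x_n = y_n for n > m. -/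
open Set Metric

noncomputable section

/-!
For each `i`, a component `Λ` of `Ψ` yields a connected block `{i} × Λ` of indices of `Φ ∘ Ψ`,
so every component of `Φ ∘ Ψ` has at least the size of the block of each of its members; since
`Φ` fails the SSC, two pieces `φ i (E)`, `φ i' (E)` with `i ≠ i'` meet and some component
contains several blocks. Regrouping `γ_n` as a sum over the indices whose component has size
`n`, and using `∑ ρ i ^ s = 1`, `γ_n(Ψ)` is the same sum over `ι × κ` taken with block sizes.
If `m` is the largest size of a component made of several blocks, the two sums agree above `m`
and the one for `Φ ∘ Ψ` is strictly larger at `m`.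
-/

open scoped Finset
open Relation

section Components

variable {ι : Type*} [Fintype ι]

open Classical in
def componentFinset (R : ι → ι → Prop) (i : ι) : Finset ι :=
  {j | ReflTransGen R i j}

@[simp]
lemma mem_componentFinset {R : ι → ι → Prop} {i j : ι} :
    j ∈ componentFinset R i ↔ ReflTransGen R i j := by
  classical simp [componentFinset]

instance Adj.instSymm {X : Type*} [MetricSpace X] (φ : ι → X → X) (E : Set X) :
    Std.Symm (Adj φ E) :=
  ⟨fun _ _ ⟨x, hi, hj⟩ => ⟨x, hj, hi⟩⟩

lemma isComponent_and_mem_iff {X : Type*} [MetricSpace X] (φ : ι → X → X) (E : Set X)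
    (Λ : Finset ι) (i : ι) :
    IsComponent φ E Λ ∧ i ∈ Λ ↔ Λ = componentFinset (Adj φ E) i := by
  constructor
  · rintro ⟨⟨a, hΛ⟩, hi⟩
    rw [← Finset.mem_coe, hΛ] at hi
    ext j
    rw [← Finset.mem_coe, hΛ, mem_componentFinset]
    exact ⟨(symm hi).trans, hi.trans⟩
  · rintro rfl
    exact ⟨⟨i, by ext; simp⟩, mem_componentFinset.2 .refl⟩

open Classical in
lemma gammaVec_eq_sum_filter {X : Type*} [MetricSpace X] (φ : ι → X → X) (E : Set X)
    (r : ι → ℝ) (s : ℝ) (n : ℕ) :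
    gammaVec φ E r s n = ∑ i with #(componentFinset (Adj φ E) i) = n, r i ^ s := by
  calc gammaVec φ E r s n
      = ∑ Λ : Finset ι, ∑ i, if IsComponent φ E Λ ∧ i ∈ Λ ∧ #Λ = n then r i ^ s else 0 := by
        unfold gammaVec
        refine Finset.sum_congr rfl fun Λ _ => ?_
        split_ifs with h
        · rw [← Finset.sum_filter]
          congr 1
          ext i
          simp [h.1, h.2]
        · exact (Finset.sum_eq_zero fun i _ => if_neg fun h' => h ⟨h'.1, h'.2.2⟩).symm
    _ = ∑ i, ∑ Λ : Finset ι,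
          if componentFinset (Adj φ E) i = Λ then
            (if #(componentFinset (Adj φ E) i) = n then r i ^ s else 0) else 0 := by
        rw [Finset.sum_comm]
        refine Finset.sum_congr rfl fun i _ => Finset.sum_congr rfl fun Λ _ => ?_
        have key : IsComponent φ E Λ ∧ i ∈ Λ ∧ #Λ = n ↔
            componentFinset (Adj φ E) i = Λ ∧ #(componentFinset (Adj φ E) i) = n := by
          rw [← and_assoc, isComponent_and_mem_iff, eq_comm]
          exact ⟨fun ⟨h, hn⟩ => ⟨h, h ▸ hn⟩, fun ⟨h, hn⟩ => ⟨h, h ▸ hn⟩⟩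
        rw [if_congr key rfl rfl, ite_and]
    _ = _ := by
        simp only [Finset.sum_ite_eq, Finset.mem_univ, if_true, Finset.sum_filter]

end Components

/-- Above the largest value `m` that `f` takes where `g < f`, the levels of `f` and `g`
coincide, while at `m` the level of `f` is strictly larger. -/
lemma prec_sum_fiber_of_le_of_exists_lt {α : Type*} [Fintype α] (f g : α → ℕ) (w : α → ℝ)
    (hw : ∀ a, 0 < w a) (hgf : ∀ a, g a ≤ f a) (hlt : ∃ a, g a < f a) :
    Prec (fun n => ∑ a with g a = n, w a) (fun n => ∑ a with f a = n, w a) := by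
  obtain ⟨a₀, ha₀, hmax⟩ := Finset.exists_max_image {a | g a < f a} f
    (hlt.imp fun a ha => by simpa using ha)
  simp only [Finset.mem_filter, Finset.mem_univ, true_and] at ha₀ hmax
  have eq_of_le_g : ∀ a, f a₀ ≤ g a → g a = f a := fun a ha =>
    (hgf a).eq_or_lt.resolve_right fun h => by have := hmax a h; omega
  have eq_of_lt_f : ∀ a, f a₀ < f a → g a = f a := fun a ha =>
    (hgf a).eq_or_lt.resolve_right fun h => by have := hmax a h; omega
  refine ⟨f a₀, ?_, fun n hn => ?_⟩
  · refine Finset.sum_lt_sum_of_subset (i := a₀) ?_ (by simp) (by simp; omega) (hw a₀)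
      fun a _ _ => (hw a).le
    intro a
    simp only [Finset.mem_filter, Finset.mem_univ, true_and]
    intro ha
    rw [← eq_of_le_g a ha.ge, ha]
  · refine Finset.sum_congr ?_ fun _ _ => rfl
    ext a
    simp only [Finset.mem_filter, Finset.mem_univ, true_and]
    constructor
    · intro ha
      rw [← eq_of_le_g a (by omega), ha]
    · intro ha
      rw [eq_of_lt_f a (by omega), ha]

section Composition

variable {X : Type*} [MetricSpace X] {ι κ : Type*} (φ : ι → X → X) (ψ : κ → X → X) (E : Set X)

lemma adj_comp_of_adj (i : ι) {j j' : κ} (h : Adj ψ E j j') :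
    Adj (fun p : ι × κ => φ p.1 ∘ ψ p.2) E (i, j) (i, j') := by
  obtain ⟨x, hj, hj'⟩ := h
  exact ⟨φ i x, by simpa [Set.image_comp] using Set.mem_image_of_mem (φ i) hj,
    by simpa [Set.image_comp] using Set.mem_image_of_mem (φ i) hj'⟩

lemma exists_adj_comp_of_not_SSC (hE : E = ⋃ j, ψ j '' E) (h : ¬ SSC φ E) :
    ∃ p q : ι × κ, p.1 ≠ q.1 ∧ Adj (fun p : ι × κ => φ p.1 ∘ ψ p.2) E p q := by
  simp only [SSC, Pairwise, not_forall, Set.not_disjoint_iff] at h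
  obtain ⟨i, i', hii', _, ⟨a, ha, rfl⟩, ⟨b, hb, hba⟩⟩ := h
  rw [hE, Set.mem_iUnion] at ha hb
  obtain ⟨⟨j, c, hc, rfl⟩, ⟨j', e, he, rfl⟩⟩ := And.intro ha hb
  exact ⟨(i, j), (i', j'), hii', φ i (ψ j c), ⟨c, hc, rfl⟩, ⟨e, he, hba⟩⟩

variable [Fintype ι] [Fintype κ]

lemma map_componentFinset_subset_comp (i : ι) (j : κ) :
    (componentFinset (Adj ψ E) j).map (Function.Embedding.sectR i κ) ⊆
      componentFinset (Adj (fun p : ι × κ => φ p.1 ∘ ψ p.2) E) (i, j) := by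
  intro p hp
  obtain ⟨j', hj', rfl⟩ := Finset.mem_map.1 hp
  exact mem_componentFinset.2 (ReflTransGen.lift (fun j => (i, j))
    (fun _ _ h => adj_comp_of_adj φ ψ E i h) _ _ (mem_componentFinset.1 hj'))

lemma card_componentFinset_le_comp (p : ι × κ) :
    #(componentFinset (Adj ψ E) p.2) ≤
      #(componentFinset (Adj (fun p : ι × κ => φ p.1 ∘ ψ p.2) E) p) := by
  simpa using Finset.card_le_card (map_componentFinset_subset_comp φ ψ E p.1 p.2)

lemma exists_card_componentFinset_lt_comp (hE : E = ⋃ j, ψ j '' E) (h : ¬ SSC φ E) :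
    ∃ p : ι × κ, #(componentFinset (Adj ψ E) p.2) <
      #(componentFinset (Adj (fun p : ι × κ => φ p.1 ∘ ψ p.2) E) p) := by
  obtain ⟨p, q, hpq, hadj⟩ := exists_adj_comp_of_not_SSC φ ψ E hE h
  refine ⟨p, ?_⟩
  rw [← Finset.card_map (Function.Embedding.sectR p.1 κ)]
  refine Finset.card_lt_card
    ((Finset.ssubset_iff_of_subset (map_componentFinset_subset_comp φ ψ E p.1 p.2)).2
      ⟨q, mem_componentFinset.2 (.single hadj), fun hq => hpq ?_⟩)
  obtain ⟨_, _, rfl⟩ := Finset.mem_map.1 hq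
  rfl

end Composition

open Classical in
lemma gammaVec_eq_sum_filter_prod {X : Type*} [MetricSpace X] {ι κ : Type*} [Fintype ι]
    [Fintype κ] (ψ : κ → X → X) (E : Set X) (ρ : ι → ℝ) (r : κ → ℝ)
    (hρ : ∀ i, 0 ≤ ρ i) (hr : ∀ j, 0 ≤ r j) (s : ℝ) (hs : ∑ i, ρ i ^ s = 1) (n : ℕ) :
    gammaVec ψ E r s n =
      ∑ p : ι × κ with #(componentFinset (Adj ψ E) p.2) = n, (ρ p.1 * r p.2) ^ s := by
  rw [Finset.sum_filter, Fintype.sum_prod_type, gammaVec_eq_sum_filter,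
    ← one_mul (∑ _ ∈ _, _), ← hs, Finset.sum_mul]
  refine Finset.sum_congr rfl fun i _ => ?_
  rw [Finset.mul_sum, Finset.sum_filter]
  refine Finset.sum_congr rfl fun j _ => ?_
  split_ifs
  · exact (Real.mul_rpow (hρ i) (hr j)).symm
  · rfl

theorem key_lemma_characteristic_increases_general {d N M : ℕ}
    (φ : Fin N → Pt d → Pt d) (ψ : Fin M → Pt d → Pt d)
    (ρ : Fin N → ℝ) (r : Fin M → ℝ)
    (hρ : ∀ i, 0 < ρ i ∧ ρ i < 1) (hr : ∀ j, 0 < r j ∧ r j < 1)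
    (E : Set (Pt d)) (hEψ : IsAttractor ψ E)
    (s : ℝ) (hsφ : ∑ i, ρ i ^ s = 1)
    (hnSSC : ¬ SSC φ E) :
    Prec (gammaVec ψ E r s)
      (gammaVec (fun p : Fin N × Fin M => φ p.1 ∘ ψ p.2) E (fun p => ρ p.1 * r p.2) s) := by
  have hE : E = ⋃ j, ψ j '' E := hEψ.2.2
  convert prec_sum_fiber_of_le_of_exists_lt
    (fun p => #(componentFinset (Adj (fun p : Fin N × Fin M => φ p.1 ∘ ψ p.2) E) p))
    (fun p => #(componentFinset (Adj ψ E) p.2)) (fun p => (ρ p.1 * r p.2) ^ s)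
    (fun p => Real.rpow_pos_of_pos (mul_pos (hρ p.1).1 (hr p.2).1) s)
    (card_componentFinset_le_comp φ ψ E) (exists_card_componentFinset_lt_comp φ ψ E hE hnSSC)
    using 1 <;> funext n
  · exact gammaVec_eq_sum_filter_prod ψ E ρ r (fun i => (hρ i).1.le) (fun j => (hr j).1.le) s hsφ n
  · exact gammaVec_eq_sum_filter _ E _ s n

theorem key_lemma_characteristic_increases {d N M : ℕ} (hN : 1 < N) (hM : 1 < M)
    (φ : Fin N → Pt d → Pt d) (ψ : Fin M → Pt d → Pt d)
    (ρ : Fin N → ℝ) (r : Fin M → ℝ)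
    (hρ : ∀ i, 0 < ρ i ∧ ρ i < 1) (hr : ∀ j, 0 < r j ∧ r j < 1)
    (hφ : ∀ i, IsSimilitude (φ i) (ρ i)) (hψ : ∀ j, IsSimilitude (ψ j) (r j))
    (hOSCφ : OSC φ) (hOSCψ : OSC ψ)
    (E : Set (Pt d)) (hEφ : IsAttractor φ E) (hEψ : IsAttractor ψ E)
    (s : ℝ) (hsφ : ∑ i, ρ i ^ s = 1) (hsψ : ∑ j, r j ^ s = 1)
    (hnSSC : ¬ SSC φ E) :
    Prec (gammaVec ψ E r s)
      (gammaVec (fun p : Fin N × Fin M => φ p.1 ∘ ψ p.2) E (fun p => ρ p.1 * r p.2) s) :=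
  key_lemma_characteristic_increases_general φ ψ ρ r hρ hr E hEψ s hsφ hnSSC
end
end

section
/- Let E be the attractor of an IFS Ψ = {ψ_j}_{j=1}^M of similitudes satisfying the strong separation condition, and let s = dim_H E. Suppose that for every similitude f with f(E) ⊂ E, the set f(E) is a finite union of elementary pieces of E. Then every IFS Φ = {φ_i}_{i=1}^N of similitudes generating E and satisfying the open set condition must satisfy the strong separation condition. -/
open Set Metric

noncomputable section

/-!
Let `s` be the similarity dimension of `Φ`. By the open set condition, `0 < μH[s] E < ∞`: the lower
bound is a mass distribution argument, spreading the unit mass `∑ ρ_w ^ s` of a cut set over the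
sets of a cover, with the open set bounding (by a volume count) how many pieces of a given size
lie near a point. Hence the pieces `φ_i E` overlap in `μH[s]`-null sets. If `φ_i E` and `φ_j E`
met, then, as both are finite unions of elementary pieces of `Ψ` and these form a net by the strong
separation condition, their intersection would contain an elementary piece `ψ_w E`, of positive
measure `r_w ^ s μH[s] E`.
-/

open MeasureTheory Module Filter Topology
open scoped ENNReal NNReal Pointwise

namespace IsSimilitude

section MetricSpace

variable {X : Type*} [MetricSpace X] {f g : X → X} {r r' : ℝ}

theorem injective (hr : 0 < r) (hf : IsSimilitude f r) : Function.Injective f := fun x y h => by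
  have := hf x y
  rw [h, dist_self, eq_comm, mul_eq_zero, or_iff_right hr.ne'] at this
  exact dist_eq_zero.mp this

theorem lipschitzWith (hr : 0 ≤ r) (hf : IsSimilitude f r) : LipschitzWith r.toNNReal f :=
  LipschitzWith.of_dist_le_mul fun x y => by rw [hf x y, Real.coe_toNNReal r hr]

theorem comp (hf : IsSimilitude f r) (hg : IsSimilitude g r') : IsSimilitude (f ∘ g) (r * r') :=
  fun x y => by rw [Function.comp_apply, Function.comp_apply, hf, hg, mul_assoc]

end MetricSpace

section NormedSpace

variable {E : Type*} [NormedAddCommGroup E] [NormedSpace ℝ E] {f : E → E} {r : ℝ}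

theorem isometry_inv_smul (hr : 0 < r) (hf : IsSimilitude f r) : Isometry (r⁻¹ • f) :=
  Isometry.of_dist_eq fun x y => by
    rw [Pi.smul_apply, Pi.smul_apply, dist_smul₀, hf x y, Real.norm_of_nonneg (inv_nonneg.2 hr.le),
      inv_mul_cancel_left₀ hr.ne']

theorem image_eq_smul_image (hr : 0 < r) (A : Set E) : f '' A = r • ((r⁻¹ • f) '' A) := by
  rw [← Set.image_smul, Set.image_image]
  simp [smul_smul, mul_inv_cancel₀ hr.ne']

theorem hausdorffMeasure_image [MeasurableSpace E] [BorelSpace E] (hr : 0 < r)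
    (hf : IsSimilitude f r) {s : ℝ} (hs : 0 ≤ s) (A : Set E) :
    μH[s] (f '' A) = ENNReal.ofReal (r ^ s) * μH[s] A := by
  rw [image_eq_smul_image hr, Measure.hausdorffMeasure_smul₀ hs hr.ne',
    (hf.isometry_inv_smul hr).hausdorffMeasure_image (Or.inl hs), ENNReal.smul_def, smul_eq_mul,
    ← ENNReal.ofReal_coe_nnreal, NNReal.coe_rpow, coe_nnnorm, Real.norm_of_nonneg hr.le]

end NormedSpace

theorem volume_image {V : Type*} [NormedAddCommGroup V] [InnerProductSpace ℝ V]
    [FiniteDimensional ℝ V] [MeasurableSpace V] [BorelSpace V] {f : V → V} {r : ℝ} (hr : 0 < r)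
    (hf : IsSimilitude f r) (A : Set V) :
    volume (f '' A) = ENNReal.ofReal (r ^ finrank ℝ V) * volume A := by
  rw [← InnerProductSpace.euclideanHausdorffMeasure_eq_volume, image_eq_smul_image hr,
    Measure.euclideanHausdorffMeasure_smul₀ _ hr.ne',
    (hf.isometry_inv_smul hr).euclideanHausdorffMeasure_image, ENNReal.smul_def, smul_eq_mul,
    ← ENNReal.ofReal_coe_nnreal, NNReal.coe_pow, coe_nnnorm, Real.norm_of_nonneg hr.le]

end IsSimilitude

theorem IsAttractor.image_subset {X ι : Type*} [MetricSpace X] {φ : ι → X → X} {E : Set X}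
    (hE : IsAttractor φ E) (i : ι) : φ i '' E ⊆ E :=
  (Set.subset_iUnion (fun j => φ j '' E) i).trans hE.2.2.symm.le

theorem IsOpen.nontrivial_of_nonempty {X : Type*} [TopologicalSpace X] [PerfectSpace X] {W : Set X}
    (hW : IsOpen W) (hne : W.Nonempty) : W.Nontrivial := by
  obtain ⟨x, hx⟩ := hne
  obtain ⟨y, ⟨hy, -⟩, hyx⟩ := accPt_iff_nhds.mp (hW.preperfect x hx) W (hW.mem_nhds hx)
  exact ⟨x, hx, y, hy, hyx.symm⟩

theorem OSC.nontrivial {X ι : Type*} [MetricSpace X] [Nontrivial ι] {φ : ι → X → X}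
    (h : OSC φ) : Nontrivial X := by
  obtain ⟨U, ⟨x, hx⟩, -, -, hdisj⟩ := h
  obtain ⟨i, j, hij⟩ := exists_pair_ne ι
  exact ⟨φ i x, φ j x, fun he => Set.disjoint_left.mp (hdisj hij) ⟨x, hx, rfl⟩ ⟨x, hx, he.symm⟩⟩

theorem Finset.sum_le_sum_sum_filter {α β M : Type*} [AddCommMonoid M] [PartialOrder M]
    [IsOrderedAddMonoid M] {s : Finset α} {t : Finset β} (p : β → α → Prop)
    [∀ b, DecidablePred (p b)] {f : α → M} (hf : ∀ a ∈ s, 0 ≤ f a)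
    (h : ∀ a ∈ s, ∃ b ∈ t, p b a) : ∑ a ∈ s, f a ≤ ∑ b ∈ t, ∑ a ∈ s with p b a, f a := by
  calc ∑ a ∈ s, f a ≤ ∑ a ∈ s, ∑ b ∈ t, if p b a then f a else 0 :=
        Finset.sum_le_sum fun a ha => by
          obtain ⟨b, hb, hpb⟩ := h a ha
          refine (if_pos hpb).symm.le.trans (Finset.single_le_sum
            (f := fun b => if p b a then f a else 0) (fun b _ => ?_) hb)
          split_ifs
          exacts [hf a ha, le_rfl]
    _ = ∑ b ∈ t, ∑ a ∈ s with p b a, f a := by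
        rw [Finset.sum_comm]
        simp_rw [Finset.sum_filter]

theorem pow_le_div_of_pow_succ_le {c rb b : ℝ} {n : ℕ} (hc : 0 < c) (hcr : c ≤ rb)
    (h : rb ^ (n + 1) ≤ b) : rb ^ n ≤ b / c := by
  rw [le_div_iff₀ hc]
  calc rb ^ n * c ≤ rb ^ n * rb := mul_le_mul_of_nonneg_left hcr (pow_nonneg (hc.le.trans hcr) n)
    _ = rb ^ (n + 1) := (pow_succ rb n).symm
    _ ≤ b := h

theorem exists_sum_rpow_eq_one {ι : Type*} [Fintype ι] [Nonempty ι] {ρ : ι → ℝ}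
    (hρ : ∀ i, 0 < ρ i ∧ ρ i < 1) : ∃ s : ℝ, 0 ≤ s ∧ ∑ i, ρ i ^ s = 1 := by
  have hcont : Continuous fun s : ℝ => ∑ i, ρ i ^ s :=
    continuous_finsetSum _ fun i _ => continuous_const.rpow continuous_id fun _ => .inl (hρ i).1.ne'
  have hlim : Tendsto (fun s : ℝ => ∑ i, ρ i ^ s) atTop (𝓝 0) := by
    simpa using tendsto_finsetSum Finset.univ fun i _ =>
      tendsto_rpow_atTop_of_base_lt_one (ρ i) (neg_one_lt_zero.trans (hρ i).1) (hρ i).2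
  obtain ⟨T, hT1, hT0⟩ :=
    ((hlim.eventually (gt_mem_nhds one_pos)).and (eventually_ge_atTop 0)).exists
  obtain ⟨s, hs, hs1⟩ := intermediate_value_Icc' hT0 hcont.continuousOn
    ⟨hT1.le, by simp [Nat.one_le_iff_ne_zero]⟩
  exact ⟨s, hs.1, hs1⟩

theorem MeasureTheory.measure_inter_eq_zero_of_sum_le {X ι : Type*} [MeasurableSpace X]
    [Fintype ι] [DecidableEq ι] {μ : Measure X} {E : Set X} {A : ι → Set X}
    (hA : ∀ i, MeasurableSet (A i)) (hcover : E ⊆ ⋃ i, A i) (hsum : ∑ i, μ (A i) ≤ μ E)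
    (hE : μ E ≠ ⊤) {i j : ι} (hij : i ≠ j) : μ (A i ∩ A j) = 0 := by
  set B := ⋃ k ∈ Finset.univ.erase i, A k
  have hB : MeasurableSet B := Finset.measurableSet_biUnion _ fun k _ => hA k
  have hEB : E ⊆ A i ∪ B := fun x hx => by
    obtain ⟨k, hk⟩ := Set.mem_iUnion.mp (hcover hx)
    rcases eq_or_ne k i with rfl | hki
    · exact .inl hk
    · exact .inr (Set.mem_biUnion (Finset.mem_erase.mpr ⟨hki, Finset.mem_univ k⟩) hk)
  have hjB : A j ⊆ B :=
    Set.subset_biUnion_of_mem (u := A) (Finset.mem_erase.mpr ⟨hij.symm, Finset.mem_univ j⟩)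
  refine nonpos_iff_eq_zero.mp <| (ENNReal.add_le_add_iff_left hE).mp ?_
  calc μ E + μ (A i ∩ A j) ≤ μ (A i ∪ B) + μ (A i ∩ B) := by gcongr
    _ = μ (A i) + μ B := measure_union_add_inter _ hB
    _ ≤ μ (A i) + ∑ k ∈ Finset.univ.erase i, μ (A k) := by
        gcongr; exact measure_biUnion_finset_le _ _
    _ = ∑ k, μ (A k) := Finset.add_sum_erase _ (fun k => μ (A k)) (Finset.mem_univ i)
    _ ≤ μ E + 0 := by rwa [add_zero]

theorem MeasureTheory.Measure.card_mul_pow_finrank_le {V : Type*} [NormedAddCommGroup V]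
    [NormedSpace ℝ V] [FiniteDimensional ℝ V] [MeasurableSpace V] [BorelSpace V] (μ : Measure V)
    [μ.IsAddHaarMeasure] {α : Type*} (S : Finset α) {A : α → Set V}
    (hA : ∀ a ∈ S, MeasurableSet (A a)) (hdisj : (S : Set α).PairwiseDisjoint A) {x : V}
    {r R : ℝ} (hr : 0 ≤ r) (hR : 0 ≤ R) (hAR : ∀ a ∈ S, A a ⊆ closedBall x R)
    (hAr : ∀ a ∈ S, μ (closedBall 0 r) ≤ μ (A a)) :
    (S.card : ℝ) * r ^ finrank ℝ V ≤ R ^ finrank ℝ V := by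
  have key : (S.card : ℝ≥0∞) * ENNReal.ofReal (r ^ finrank ℝ V) * μ (closedBall 0 1) ≤
      ENNReal.ofReal (R ^ finrank ℝ V) * μ (closedBall 0 1) :=
    calc (S.card : ℝ≥0∞) * ENNReal.ofReal (r ^ finrank ℝ V) * μ (closedBall 0 1)
        = ∑ a ∈ S, μ (closedBall 0 r) := by
          rw [Finset.sum_const, nsmul_eq_mul, mul_assoc, Measure.addHaar_closedBall' μ 0 hr]
      _ ≤ ∑ a ∈ S, μ (A a) := Finset.sum_le_sum hAr
      _ = μ (⋃ a ∈ S, A a) := (measure_biUnion_finset hdisj hA).symm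
      _ ≤ μ (closedBall x R) := measure_mono (Set.iUnion₂_subset hAR)
      _ = ENNReal.ofReal (R ^ finrank ℝ V) * μ (closedBall 0 1) :=
          Measure.addHaar_closedBall' μ x hR
  rw [ENNReal.mul_le_mul_iff_left (measure_closedBall_pos μ 0 one_pos).ne'
    measure_closedBall_lt_top.ne, ← ENNReal.ofReal_natCast, ← ENNReal.ofReal_mul (by positivity),
    ENNReal.ofReal_le_ofReal_iff (by positivity)] at key
  exact key

section HausdorffMeasureOfCompact

variable {X : Type*} [EMetricSpace X]

theorem exists_pos_ediam_thickening_rpow_le (t : Set X) {s : ℝ} (hs : 0 ≤ s) {ε : ℝ≥0∞}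
    (hε : ε ≠ 0) : ∃ δ : ℝ≥0, 0 < δ ∧ ediam (Metric.thickening δ t) ^ s ≤ ediam t ^ s + ε := by
  by_cases htop : ediam t ^ s = ⊤
  · exact ⟨1, one_pos, by simp [htop]⟩
  have hlim : Tendsto (fun δ : ℝ≥0 => (ediam t + 2 * (δ : ℝ≥0∞)) ^ s) (𝓝 0) (𝓝 (ediam t ^ s)) := by
    refine (ENNReal.continuous_rpow_const.tendsto _).comp ?_
    simpa using (tendsto_const_nhds (x := ediam t)).add (ENNReal.Tendsto.const_mul (a := 2)
      (ENNReal.tendsto_coe.2 (tendsto_id (x := 𝓝 (0 : ℝ≥0)))) (.inr (by simp)))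
  obtain ⟨δ, hδ, hδ0⟩ :=
    (((hlim.eventually (gt_mem_nhds (ENNReal.lt_add_right htop hε))).filter_mono
      nhdsWithin_le_nhds).and (self_mem_nhdsWithin (s := Set.Ioi 0))).exists
  exact ⟨δ, hδ0, (ENNReal.rpow_le_rpow (Metric.ediam_thickening_le δ) hs).trans hδ.le⟩

variable [MeasurableSpace X] [BorelSpace X]

/-- Every countable cover of `E` can be thickened slightly to an open one, which has a finite
subcover. -/
theorem IsCompact.le_hausdorffMeasure {E : Set X} (hE : IsCompact E) {s : ℝ} (hs : 0 ≤ s)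
    {c : ℝ≥0∞} (h : ∀ (F : Finset ℕ) (W : ℕ → Set X), (∀ n ∈ F, IsOpen (W n)) →
      (∀ n ∈ F, (W n).Nonempty) → E ⊆ ⋃ n ∈ F, W n → c ≤ ∑ n ∈ F, ediam (W n) ^ s) :
    c ≤ μH[s] E := by
  classical
  rw [Measure.hausdorffMeasure_apply]
  refine le_iSup₂_of_le 1 one_pos (le_iInf fun t => le_iInf fun hcov => le_iInf fun _ => ?_)
  refine ENNReal.le_of_forall_pos_le_add fun ε hε _ => ?_
  obtain ⟨ε', hε'0, hε'⟩ := ENNReal.exists_pos_sum_of_countable (ENNReal.coe_ne_zero.2 hε.ne') ℕ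
  choose δ hδ0 hδ using fun n =>
    exists_pos_ediam_thickening_rpow_le (t n) hs (ENNReal.coe_ne_zero.2 (hε'0 n).ne')
  set W := fun n => Metric.thickening (δ n) (t n)
  obtain ⟨F, hF⟩ := hE.elim_finite_subcover W (fun n => Metric.isOpen_thickening) fun x hx =>
    have ⟨n, hn⟩ := Set.mem_iUnion.mp (hcov hx)
    Set.mem_iUnion_of_mem n (Metric.self_subset_thickening (hδ0 n) _ hn)
  set G := F.filter fun n => (W n).Nonempty
  have hcovG : E ⊆ ⋃ n ∈ G, W n := fun x hx => by
    obtain ⟨n, hn, hxn⟩ := Set.mem_iUnion₂.mp (hF hx)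
    exact Set.mem_biUnion (Finset.mem_filter.mpr ⟨hn, x, hxn⟩) hxn
  have ht n (hn : n ∈ G) : (t n).Nonempty := by
    by_contra h
    simp [G, W, Set.not_nonempty_iff_eq_empty.mp h] at hn
  calc c ≤ ∑ n ∈ G, ediam (W n) ^ s :=
        h G W (fun _ _ => Metric.isOpen_thickening) (fun n hn => (Finset.mem_filter.mp hn).2) hcovG
    _ ≤ ∑ n ∈ G, ((⨆ _ : (t n).Nonempty, ediam (t n) ^ s) + ε' n) :=
        Finset.sum_le_sum fun n hn => by rw [iSup_pos (ht n hn)]; exact hδ n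
    _ ≤ (∑' n, ⨆ _ : (t n).Nonempty, ediam (t n) ^ s) + ∑' n, (ε' n : ℝ≥0∞) := by
        rw [Finset.sum_add_distrib]
        exact add_le_add (ENNReal.sum_le_tsum _) (ENNReal.sum_le_tsum _)
    _ ≤ _ := by gcongr

end HausdorffMeasureOfCompact

namespace IFS

section Words

variable {X : Type*} {ι : Type*}

/-- `φ_w = φ_{w₁} ∘ ⋯ ∘ φ_{wₘ}` for `w = [w₁, …, wₘ]`; the sets `φ_w '' E` are the elementary pieces
of `E`. -/
def wordMap (φ : ι → X → X) (w : List ι) : X → X := (w.map φ).foldr (· ∘ ·) id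

def wordRatio (ρ : ι → ℝ) (w : List ι) : ℝ := (w.map ρ).prod

variable {φ : ι → X → X} {ρ : ι → ℝ}

@[simp] theorem wordMap_nil : wordMap φ [] = id := rfl

@[simp] theorem wordMap_cons (i : ι) (w : List ι) : wordMap φ (i :: w) = φ i ∘ wordMap φ w := rfl

theorem wordMap_append (v w : List ι) : wordMap φ (v ++ w) = wordMap φ v ∘ wordMap φ w := by
  induction v with
  | nil => rfl
  | cons i v ih => rw [List.cons_append, wordMap_cons, ih, wordMap_cons, Function.comp_assoc]

@[simp] theorem wordRatio_nil : wordRatio ρ [] = 1 := rfl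

@[simp] theorem wordRatio_cons (i : ι) (w : List ι) :
    wordRatio ρ (i :: w) = ρ i * wordRatio ρ w := List.prod_cons

theorem wordRatio_pos (hρ : ∀ i, 0 < ρ i) (w : List ι) : 0 < wordRatio ρ w :=
  List.prod_pos fun _ hx => by obtain ⟨i, -, rfl⟩ := List.mem_map.mp hx; exact hρ i

theorem wordRatio_nonneg (hρ : ∀ i, 0 ≤ ρ i) (w : List ι) : 0 ≤ wordRatio ρ w :=
  List.prod_nonneg fun _ hx => by obtain ⟨i, -, rfl⟩ := List.mem_map.mp hx; exact hρ i

theorem wordRatio_cons_rpow (hρ : ∀ i, 0 ≤ ρ i) (i : ι) (w : List ι) (s : ℝ) :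
    wordRatio ρ (i :: w) ^ s = ρ i ^ s * wordRatio ρ w ^ s := by
  rw [wordRatio_cons, Real.mul_rpow (hρ i) (wordRatio_nonneg hρ w)]

theorem isSimilitude_wordMap [MetricSpace X] (hsim : ∀ i, IsSimilitude (φ i) (ρ i)) (w : List ι) :
    IsSimilitude (wordMap φ w) (wordRatio ρ w) := by
  induction w with
  | nil => exact fun x y => (one_mul _).symm
  | cons i w ih => exact (hsim i).comp ih

theorem ediam_wordMap_image_le [MetricSpace X] (hρ : ∀ i, 0 < ρ i)
    (hsim : ∀ i, IsSimilitude (φ i) (ρ i)) (w : List ι) (A : Set X) :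
    ediam (wordMap φ w '' A) ≤ ENNReal.ofReal (wordRatio ρ w) * ediam A :=
  ((isSimilitude_wordMap hsim w).lipschitzWith (wordRatio_pos hρ w).le).ediam_image_le A

theorem wordMap_image_subset {A : Set X} (hA : ∀ i, φ i '' A ⊆ A) (w : List ι) :
    wordMap φ w '' A ⊆ A := by
  induction w with
  | nil => simp
  | cons i w ih => rw [wordMap_cons, Set.image_comp]; exact (Set.image_mono ih).trans (hA i)

theorem wordMap_image_subset_of_prefix {A : Set X} (hA : ∀ i, φ i '' A ⊆ A) {v w : List ι}
    (hvw : v <+: w) : wordMap φ w '' A ⊆ wordMap φ v '' A := by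
  obtain ⟨u, rfl⟩ := hvw
  rw [wordMap_append, Set.image_comp]
  exact Set.image_mono (wordMap_image_subset hA u)

theorem disjoint_wordMap_image [MetricSpace X] {A : Set X} (hinj : ∀ i, Function.Injective (φ i))
    (hA : ∀ i, φ i '' A ⊆ A) (hsep : SSC φ A) :
    ∀ {v w : List ι}, ¬ v <+: w → ¬ w <+: v → Disjoint (wordMap φ v '' A) (wordMap φ w '' A)
  | [], _, h, _ | _, [], _, h => absurd List.nil_prefix h
  | i :: v, j :: w, hvw, hwv => by
    rw [wordMap_cons, wordMap_cons, Set.image_comp, Set.image_comp]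
    rcases eq_or_ne i j with rfl | hij
    · rw [List.cons_prefix_cons, not_and] at hvw hwv
      exact (Set.disjoint_image_iff (hinj i)).mpr
        (disjoint_wordMap_image hinj hA hsep (hvw rfl) (hwv rfl))
    · exact (hsep hij).mono (Set.image_mono (wordMap_image_subset hA v))
        (Set.image_mono (wordMap_image_subset hA w))

theorem wordMap_image_closedBall_subset [MetricSpace X] (hsim : ∀ i, IsSimilitude (φ i) (ρ i))
    {w : List ι} {b : ℝ} (hb : 0 ≤ b) (hw : wordRatio ρ w ≤ b) {u e x : X} {a K : ℝ}
    (he : dist e u ≤ K) (hex : dist (wordMap φ w e) x ≤ b) :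
    wordMap φ w '' closedBall u a ⊆ closedBall x (b * (a + K + 1)) := by
  rintro _ ⟨y, hy, rfl⟩
  have hye : dist y e ≤ a + K :=
    (dist_triangle y u e).trans (add_le_add (mem_closedBall.mp hy) (dist_comm u e ▸ he))
  rw [mem_closedBall]
  calc dist (wordMap φ w y) x ≤ dist (wordMap φ w y) (wordMap φ w e) + dist (wordMap φ w e) x :=
        dist_triangle _ _ _
    _ ≤ b * (a + K) + b := by
        rw [isSimilitude_wordMap hsim w y e]
        exact add_le_add (mul_le_mul hw hye dist_nonneg hb) hex
    _ = b * (a + K + 1) := by ring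

end Words

section CutSet

variable {ι : Type*} [Fintype ι] [DecidableEq ι] {ρ : ι → ℝ}

/-- For `rb ^ n ≤ b`, where `rb` bounds all ratios, `cutSet ρ n b` is the set of words `w` with
`ρ_w ≤ b < ρ_{w'}`, `w'` being `w` without its last letter; `n` is fuel for the recursion. -/
def cutSet (ρ : ι → ℝ) : ℕ → ℝ → Finset (List ι)
  | 0, _ => {[]}
  | n + 1, b =>
    if 1 ≤ b then {[]} else Finset.univ.biUnion fun i => (cutSet ρ n (b / ρ i)).image (List.cons i)

theorem pairwiseDisjoint_image_cons (T : ι → Finset (List ι)) :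
    ((Finset.univ : Finset ι) : Set ι).PairwiseDisjoint fun i => (T i).image (List.cons i) :=
  fun i _ j _ hij => Finset.disjoint_left.mpr fun w hi hj => by
    obtain ⟨v, -, rfl⟩ := Finset.mem_image.mp hi
    obtain ⟨v', -, h⟩ := Finset.mem_image.mp hj
    exact hij (List.cons_eq_cons.mp h).1.symm

theorem cutSet_of_one_le {b : ℝ} (hb : 1 ≤ b) : ∀ n, cutSet ρ n b = {[]}
  | 0 => rfl
  | _ + 1 => if_pos hb

theorem mem_cutSet_succ {n : ℕ} {b : ℝ} (hb : b < 1) {w : List ι} :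
    w ∈ cutSet ρ (n + 1) b ↔ ∃ i, ∃ v ∈ cutSet ρ n (b / ρ i), i :: v = w := by
  simp [cutSet, if_neg (not_le.mpr hb)]

theorem wordRatio_le_of_mem_cutSet {rb : ℝ} (hρ : ∀ i, 0 < ρ i) (hrb : ∀ i, ρ i ≤ rb) :
    ∀ {n : ℕ} {b : ℝ}, rb ^ n ≤ b → ∀ w ∈ cutSet ρ n b, wordRatio ρ w ≤ b
  | 0, b, hb, w, hw => by simp_all [cutSet]
  | n + 1, b, hb, w, hw => by
    rcases le_or_gt 1 b with h1 | h1
    · simp_all [cutSet_of_one_le h1]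
    obtain ⟨i, v, hv, rfl⟩ := (mem_cutSet_succ h1).mp hw
    have := wordRatio_le_of_mem_cutSet hρ hrb (pow_le_div_of_pow_succ_le (hρ i) (hrb i) hb) v hv
    rw [wordRatio_cons, ← le_div_iff₀' (hρ i)]
    exact this

theorem mul_le_wordRatio_of_mem_cutSet {rm : ℝ} (hρ : ∀ i, 0 < ρ i) (hrm : ∀ i, rm ≤ ρ i)
    (hrm0 : 0 ≤ rm) (hrm1 : rm ≤ 1) :
    ∀ {n : ℕ} {b : ℝ}, 0 < b → b ≤ 1 → ∀ w ∈ cutSet ρ n b, b * rm ≤ wordRatio ρ w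
  | 0, b, _, hb1, w, hw => by
    simp only [cutSet, Finset.mem_singleton] at hw
    simpa [hw] using mul_le_one₀ hb1 hrm0 hrm1
  | n + 1, b, hb0, hb1, w, hw => by
    rcases le_or_gt 1 b with h1 | h1
    · simp only [cutSet_of_one_le h1, Finset.mem_singleton] at hw
      simpa [hw] using mul_le_one₀ hb1 hrm0 hrm1
    obtain ⟨i, v, hv, rfl⟩ := (mem_cutSet_succ h1).mp hw
    rw [wordRatio_cons]
    rcases le_or_gt (b / ρ i) 1 with h2 | h2
    · have := mul_le_wordRatio_of_mem_cutSet hρ hrm hrm0 hrm1 (div_pos hb0 (hρ i)) h2 v hv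
      rwa [← mul_div_right_comm, div_le_iff₀' (hρ i)] at this
    · rw [cutSet_of_one_le h2.le, Finset.mem_singleton] at hv
      rw [hv, wordRatio_nil, mul_one]
      exact (mul_le_of_le_one_left hrm0 hb1).trans (hrm i)

theorem sum_cutSet {s : ℝ} (hρ : ∀ i, 0 ≤ ρ i) (hsum : ∑ i, ρ i ^ s = 1) :
    ∀ (n : ℕ) (b : ℝ), ∑ w ∈ cutSet ρ n b, wordRatio ρ w ^ s = 1
  | 0, _ => by simp [cutSet]
  | n + 1, b => by
    rcases le_or_gt 1 b with h1 | h1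
    · simp [cutSet_of_one_le h1]
    rw [cutSet, if_neg (not_le.mpr h1), Finset.sum_biUnion (pairwiseDisjoint_image_cons _),
      ← hsum]
    refine Finset.sum_congr rfl fun i _ => ?_
    simp_rw [Finset.sum_image fun _ _ _ _ h => List.cons_injective h, wordRatio_cons_rpow hρ,
      ← Finset.mul_sum, sum_cutSet hρ hsum, mul_one]

theorem eq_of_prefix_of_mem_cutSet :
    ∀ {n : ℕ} {b : ℝ} {v w : List ι}, v ∈ cutSet ρ n b → w ∈ cutSet ρ n b → v <+: w → v = w
  | 0, _, _, _, hv, hw, _ => by simp_all [cutSet]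
  | n + 1, b, v, w, hv, hw, hvw => by
    rcases le_or_gt 1 b with h1 | h1
    · simp_all [cutSet_of_one_le h1]
    obtain ⟨i, v', hv', rfl⟩ := (mem_cutSet_succ h1).mp hv
    obtain ⟨j, w', hw', rfl⟩ := (mem_cutSet_succ h1).mp hw
    obtain ⟨rfl, hvw'⟩ := List.cons_prefix_cons.mp hvw
    rw [eq_of_prefix_of_mem_cutSet (n := n) hv' hw' hvw']

theorem exists_prefix_mem_cutSet {rb : ℝ} (hρ : ∀ i, 0 < ρ i) (hrb : ∀ i, ρ i ≤ rb) :
    ∀ {n : ℕ} {b : ℝ}, rb ^ n ≤ b → ∀ w : List ι, wordRatio ρ w ≤ b → ∃ v ∈ cutSet ρ n b, v <+: w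
  | 0, _, _, _, _ => ⟨[], by simp [cutSet], List.nil_prefix⟩
  | n + 1, b, hb, w, hw => by
    rcases le_or_gt 1 b with h1 | h1
    · exact ⟨[], by simp [cutSet_of_one_le h1], List.nil_prefix⟩
    obtain _ | ⟨i, w⟩ := w
    · simp at hw; linarith
    rw [wordRatio_cons, ← le_div_iff₀' (hρ i)] at hw
    obtain ⟨v, hv, hvw⟩ :=
      exists_prefix_mem_cutSet hρ hrb (pow_le_div_of_pow_succ_le (hρ i) (hrb i) hb) w hw
    exact ⟨i :: v, (mem_cutSet_succ h1).mpr ⟨i, v, hv, rfl⟩, List.cons_prefix_cons.mpr ⟨rfl, hvw⟩⟩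

theorem sum_cutSet_filter_prefix_le {s : ℝ} (hρ : ∀ i, 0 ≤ ρ i) (hsum : ∑ i, ρ i ^ s = 1) :
    ∀ (v : List ι) (n : ℕ) (b : ℝ),
      ∑ w ∈ cutSet ρ n b with v <+: w, wordRatio ρ w ^ s ≤ wordRatio ρ v ^ s
  | [], n, b => by simp [sum_cutSet hρ hsum]
  | i :: v, n, b => by
    have hnil : ∑ w ∈ ({[]} : Finset (List ι)) with i :: v <+: w, wordRatio ρ w ^ s = 0 := by
      simp [Finset.filter_singleton]
    obtain _ | n := n
    · exact hnil ▸ Real.rpow_nonneg (wordRatio_nonneg hρ _) s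
    rcases le_or_gt 1 b with h1 | h1
    · exact cutSet_of_one_le (ρ := ρ) h1 (n + 1) ▸ hnil ▸ Real.rpow_nonneg (wordRatio_nonneg hρ _) s
    rw [Finset.sum_filter, cutSet, if_neg (not_le.mpr h1),
      Finset.sum_biUnion (pairwiseDisjoint_image_cons _), Finset.sum_eq_single i]
    · simp only [Finset.sum_image fun _ _ _ _ h => List.cons_injective h, List.cons_prefix_cons,
        true_and, wordRatio_cons_rpow hρ, ← mul_ite_zero, ← Finset.mul_sum, ← Finset.sum_filter]
      exact mul_le_mul_of_nonneg_left (sum_cutSet_filter_prefix_le hρ hsum v n _)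
        (Real.rpow_nonneg (hρ i) s)
    · intro j _ hji
      refine Finset.sum_eq_zero fun w hw => if_neg ?_
      obtain ⟨u, -, rfl⟩ := Finset.mem_image.mp hw
      exact fun h => hji (List.cons_prefix_cons.mp h).1.symm
    · simp

theorem exists_mem_cutSet_mem_image {X : Type*} {φ : ι → X → X} {A : Set X}
    (hA : A ⊆ ⋃ i, φ i '' A) : ∀ (n : ℕ) (b : ℝ), ∀ x ∈ A, ∃ w ∈ cutSet ρ n b, x ∈ wordMap φ w '' A
  | 0, _, x, hx => ⟨[], by simp [cutSet], by simpa using hx⟩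
  | n + 1, b, x, hx => by
    rcases le_or_gt 1 b with h1 | h1
    · exact ⟨[], by simp [cutSet_of_one_le h1], by simpa using hx⟩
    obtain ⟨i, y, hy, rfl⟩ := Set.mem_iUnion.mp (hA hx)
    obtain ⟨w, hw, hyw⟩ := exists_mem_cutSet_mem_image hA n (b / ρ i) y hy
    exact ⟨i :: w, (mem_cutSet_succ h1).mpr ⟨i, w, hw, rfl⟩, by
      rw [wordMap_cons, Set.image_comp]; exact Set.mem_image_of_mem _ hyw⟩

end CutSet

section UpperBound

variable {X : Type*} [MetricSpace X] {ι : Type*} [Fintype ι] {φ : ι → X → X} {ρ : ι → ℝ}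

theorem hausdorffMeasure_le_ediam_rpow [DecidableEq ι] [Nonempty ι] [MeasurableSpace X]
    [BorelSpace X] (hρ : ∀ i, 0 < ρ i ∧ ρ i < 1) (hsim : ∀ i, IsSimilitude (φ i) (ρ i))
    {E : Set X} (hbdd : Bornology.IsBounded E) (hE : E ⊆ ⋃ i, φ i '' E) {s : ℝ} (hs : 0 ≤ s)
    (hsum : ∑ i, ρ i ^ s = 1) : μH[s] E ≤ ediam E ^ s := by
  obtain ⟨i₀, hi₀⟩ := Finite.exists_max ρ
  have hρ0 i : 0 < ρ i := (hρ i).1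
  have hcyl n : ∀ w ∈ cutSet ρ n (ρ i₀ ^ n),
      ediam (wordMap φ w '' E) ≤ ENNReal.ofReal (ρ i₀) ^ n * ediam E := fun w hw => by
    rw [← ENNReal.ofReal_pow (hρ0 i₀).le]
    exact (ediam_wordMap_image_le hρ0 hsim w E).trans <| by
      gcongr; exact wordRatio_le_of_mem_cutSet hρ0 hi₀ le_rfl w hw
  refine (Measure.hausdorffMeasure_le_liminf_sum (l := atTop) s E _ ?_
    (fun n (w : cutSet ρ n (ρ i₀ ^ n)) => wordMap φ w '' E) (.of_forall fun n w => hcyl n w w.2)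
    (.of_forall fun n x hx => ?_)).trans ?_
  · simpa using ENNReal.Tendsto.mul_const (ENNReal.tendsto_pow_atTop_nhds_zero_of_lt_one
      (ENNReal.ofReal_lt_one.mpr (hρ i₀).2)) (.inr hbdd.ediam_ne_top)
  · obtain ⟨w, hw, hxw⟩ := exists_mem_cutSet_mem_image hE n _ x hx
    exact Set.mem_iUnion.mpr ⟨⟨w, hw⟩, hxw⟩
  refine liminf_le_of_frequently_le (.of_forall fun n => ?_)
  calc ∑ w : cutSet ρ n (ρ i₀ ^ n), ediam (wordMap φ w '' E) ^ s
      ≤ ∑ w ∈ cutSet ρ n (ρ i₀ ^ n), ENNReal.ofReal (wordRatio ρ w ^ s) * ediam E ^ s := by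
        rw [← Finset.sum_coe_sort (cutSet ρ n _)]
        refine Finset.sum_le_sum fun w _ => ?_
        rw [← ENNReal.ofReal_rpow_of_nonneg (wordRatio_pos hρ0 w).le hs,
          ← ENNReal.mul_rpow_of_nonneg _ _ hs]
        exact ENNReal.rpow_le_rpow (ediam_wordMap_image_le hρ0 hsim w E) hs
    _ = ediam E ^ s := by
        rw [← Finset.sum_mul, ← ENNReal.ofReal_sum_of_nonneg fun w _ =>
          Real.rpow_nonneg (wordRatio_pos hρ0 w).le s, sum_cutSet (fun i => (hρ0 i).le) hsum,
          ENNReal.ofReal_one, one_mul]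

end UpperBound

section MassDistribution

variable {X : Type*} [MetricSpace X] {ι : Type*} [Fintype ι] [DecidableEq ι] {φ : ι → X → X}
  {ρ : ι → ℝ}

open Classical in
def cutSetNear (φ : ι → X → X) (ρ : ι → ℝ) (E : Set X) (n : ℕ) (x : X) (b : ℝ) :
    Finset (List ι) :=
  {v ∈ cutSet ρ n b | (wordMap φ v '' E ∩ closedBall x b).Nonempty}

theorem pairwiseDisjoint_wordMap_image_cutSet (hinj : ∀ i, Function.Injective (φ i)) {A : Set X}
    (hA : ∀ i, φ i '' A ⊆ A) (hsep : SSC φ A) (n : ℕ) (b : ℝ) :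
    (cutSet ρ n b : Set (List ι)).PairwiseDisjoint fun v => wordMap φ v '' A :=
  fun _ hv _ hw hvw => disjoint_wordMap_image hinj hA hsep
    (fun h => hvw (eq_of_prefix_of_mem_cutSet hv hw h))
    (fun h => hvw (eq_of_prefix_of_mem_cutSet hw hv h).symm)

theorem mem_cutSetNear {E : Set X} {n : ℕ} {x : X} {b : ℝ} {v : List ι} :
    v ∈ cutSetNear φ ρ E n x b ↔
      v ∈ cutSet ρ n b ∧ (wordMap φ v '' E ∩ closedBall x b).Nonempty := by
  classical exact Finset.mem_filter

/-- Mass distribution: the unit mass `∑_{w ∈ Λ} ρ_w ^ s` of a fine cut set `Λ` is spread over the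
balls of the cover, each ball receiving at most `C * b ^ s`. -/
theorem one_le_mul_sum_rpow_of_subset_iUnion_closedBall (hρ : ∀ i, 0 < ρ i) {rb : ℝ}
    (hrb : ∀ i, ρ i ≤ rb) (hrb1 : rb < 1) {E : Set X} (hE : ∀ i, φ i '' E ⊆ E) (hEne : E.Nonempty)
    {s : ℝ} (hs : 0 ≤ s) (hsum : ∑ i, ρ i ^ s = 1) {C : ℝ}
    (hC : ∀ n x b, rb ^ n ≤ b → 0 < b → b ≤ 1 → ((cutSetNear φ ρ E n x b).card : ℝ) ≤ C)
    {κ : Type*} {F : Finset κ} {x : κ → X} {b : κ → ℝ} (hb0 : ∀ k ∈ F, 0 < b k)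
    (hb1 : ∀ k ∈ F, b k ≤ 1) (hcov : E ⊆ ⋃ k ∈ F, closedBall (x k) (b k)) :
    1 ≤ C * ∑ k ∈ F, b k ^ s := by
  obtain ⟨e, he⟩ := hEne
  obtain ⟨k₀, hk₀, -⟩ := Set.mem_iUnion₂.mp (hcov he)
  have hFne : F.Nonempty := ⟨k₀, hk₀⟩
  obtain ⟨m, hm⟩ := exists_pow_lt_of_lt_one ((Finset.lt_inf'_iff hFne).mpr hb0) hrb1
  have hfuel k (hk : k ∈ F) : rb ^ m ≤ b k := hm.le.trans (Finset.inf'_le _ hk)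
  have hρ0 i : 0 ≤ ρ i := (hρ i).le
  have hnear : ∀ w ∈ cutSet ρ m (rb ^ m),
      ∃ k ∈ F, ∃ v ∈ cutSetNear φ ρ E m (x k) (b k), v <+: w := fun w hw => by
    have hwE : wordMap φ w e ∈ E := wordMap_image_subset hE w ⟨e, he, rfl⟩
    obtain ⟨k, hk, hwk⟩ := Set.mem_iUnion₂.mp (hcov hwE)
    obtain ⟨v, hv, hvw⟩ := exists_prefix_mem_cutSet hρ hrb (hfuel k hk) w
      ((wordRatio_le_of_mem_cutSet hρ hrb le_rfl w hw).trans (hfuel k hk))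
    exact ⟨k, hk, v, mem_cutSetNear.mpr ⟨hv, _,
      wordMap_image_subset_of_prefix hE hvw ⟨e, he, rfl⟩, hwk⟩, hvw⟩
  set T := F.sigma fun k => cutSetNear φ ρ E m (x k) (b k)
  calc (1 : ℝ) = ∑ w ∈ cutSet ρ m (rb ^ m), wordRatio ρ w ^ s := (sum_cutSet hρ0 hsum _ _).symm
    _ ≤ ∑ q ∈ T, ∑ w ∈ cutSet ρ m (rb ^ m) with q.2 <+: w, wordRatio ρ w ^ s := by
        refine Finset.sum_le_sum_sum_filter (t := T) (fun q w => q.2 <+: w)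
          (fun w _ => Real.rpow_nonneg (wordRatio_nonneg hρ0 w) s) fun w hw => ?_
        obtain ⟨k, hk, v, hv, hvw⟩ := hnear w hw
        exact ⟨⟨k, v⟩, Finset.mem_sigma.mpr ⟨hk, hv⟩, hvw⟩
    _ ≤ ∑ q ∈ T, wordRatio ρ q.2 ^ s :=
        Finset.sum_le_sum fun q _ => sum_cutSet_filter_prefix_le hρ0 hsum q.2 m (rb ^ m)
    _ ≤ ∑ q ∈ T, b q.1 ^ s := by
        refine Finset.sum_le_sum fun q hq => ?_
        obtain ⟨hq1, hq2⟩ := Finset.mem_sigma.mp hq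
        exact Real.rpow_le_rpow (wordRatio_nonneg hρ0 _) (wordRatio_le_of_mem_cutSet hρ hrb
          (hfuel _ hq1) _ (mem_cutSetNear.mp hq2).1) hs
    _ = ∑ k ∈ F, (cutSetNear φ ρ E m (x k) (b k)).card * b k ^ s := by
        simp [T, Finset.sum_sigma]
    _ ≤ ∑ k ∈ F, C * b k ^ s := by
        gcongr with k hk
        · exact Real.rpow_nonneg (hb0 k hk).le s
        · exact hC m (x k) (b k) (hfuel k hk) (hb0 k hk) (hb1 k hk)
    _ = C * ∑ k ∈ F, b k ^ s := Finset.mul_sum _ _ _ |>.symm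

theorem ofReal_inv_le_sum_ediam_rpow [PerfectSpace X] (hρ : ∀ i, 0 < ρ i) {rb : ℝ}
    (hrb : ∀ i, ρ i ≤ rb) (hrb1 : rb < 1) {E : Set X} (hE : ∀ i, φ i '' E ⊆ E) (hEne : E.Nonempty)
    {s : ℝ} (hs : 0 ≤ s) (hsum : ∑ i, ρ i ^ s = 1) {C : ℝ} (hC1 : 1 ≤ C)
    (hC : ∀ n x b, rb ^ n ≤ b → 0 < b → b ≤ 1 → ((cutSetNear φ ρ E n x b).card : ℝ) ≤ C)
    {F : Finset ℕ} {W : ℕ → Set X} (hWo : ∀ n ∈ F, IsOpen (W n)) (hWne : ∀ n ∈ F, (W n).Nonempty)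
    (hcov : E ⊆ ⋃ n ∈ F, W n) : ENNReal.ofReal C⁻¹ ≤ ∑ n ∈ F, ediam (W n) ^ s := by
  by_cases hbig : ∃ n ∈ F, 1 ≤ ediam (W n)
  · obtain ⟨n, hn, h1⟩ := hbig
    calc ENNReal.ofReal C⁻¹ ≤ 1 := ENNReal.ofReal_le_one.mpr (inv_le_one_of_one_le₀ hC1)
      _ ≤ ediam (W n) ^ s := ENNReal.one_rpow s ▸ ENNReal.rpow_le_rpow h1 hs
      _ ≤ _ := Finset.single_le_sum (f := fun n => ediam (W n) ^ s) (fun _ _ => bot_le) hn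
  push Not at hbig
  have hfin n (hn : n ∈ F) : ediam (W n) ≠ ⊤ := ((hbig n hn).trans ENNReal.one_lt_top).ne
  have hbdd n (hn : n ∈ F) : Bornology.IsBounded (W n) := isBounded_iff_ediam_ne_top.mpr (hfin n hn)
  have : Nonempty X := ⟨hEne.some⟩
  choose! x hx using hWne
  have key := one_le_mul_sum_rpow_of_subset_iUnion_closedBall hρ hrb hrb1 hE hEne hs hsum hC
    (b := fun n => diam (W n)) (x := x)
    (fun n hn => ENNReal.toReal_pos
      (ediam_pos_iff.mpr ((hWo n hn).nontrivial_of_nonempty ⟨x n, hx n hn⟩)).ne' (hfin n hn))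
    (fun n hn => ENNReal.toReal_le_of_le_ofReal zero_le_one (by simpa using (hbig n hn).le))
    (hcov.trans (Set.iUnion₂_mono fun n hn y hy => dist_le_diam_of_mem (hbdd n hn) hy (hx n hn)))
  calc ENNReal.ofReal C⁻¹ ≤ ENNReal.ofReal (∑ n ∈ F, diam (W n) ^ s) :=
        ENNReal.ofReal_le_ofReal ((inv_le_iff_one_le_mul₀' (by linarith)).mpr key)
    _ = ∑ n ∈ F, ediam (W n) ^ s := by
        rw [ENNReal.ofReal_sum_of_nonneg fun n _ => Real.rpow_nonneg diam_nonneg s]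
        refine Finset.sum_congr rfl fun n hn => ?_
        rw [← ENNReal.ofReal_rpow_of_nonneg diam_nonneg hs, diam, ENNReal.ofReal_toReal (hfin n hn)]

end MassDistribution

section Counting

variable {ι : Type*} {ρ : ι → ℝ} {V : Type*} [NormedAddCommGroup V] [InnerProductSpace ℝ V]
  [FiniteDimensional ℝ V] [MeasurableSpace V] [BorelSpace V] {φ : ι → V → V}

theorem volume_wordMap_image_closedBall (hρ : ∀ i, 0 < ρ i) (hsim : ∀ i, IsSimilitude (φ i) (ρ i))
    (w : List ι) (u : V) {a : ℝ} (ha : 0 ≤ a) :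
    volume (wordMap φ w '' closedBall u a) = volume (closedBall (0 : V) (wordRatio ρ w * a)) := by
  rw [(isSimilitude_wordMap hsim w).volume_image (wordRatio_pos hρ w),
    Measure.addHaar_closedBall' _ u ha,
    Measure.addHaar_closedBall' _ 0 (mul_nonneg (wordRatio_pos hρ w).le ha), ← mul_assoc,
    ← ENNReal.ofReal_mul (pow_nonneg (wordRatio_pos hρ w).le _), mul_pow]

/-- The counting lemma behind the open set condition: pieces of a ball in the open set at scale
`b` are disjoint and have volume comparable to `b ^ dim`, so boundedly many fit near any point. -/
theorem exists_card_cutSetNear_le [Fintype ι] [DecidableEq ι] [Nonempty ι]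
    (hρ : ∀ i, 0 < ρ i ∧ ρ i < 1) (hsim : ∀ i, IsSimilitude (φ i) (ρ i)) {rb : ℝ}
    (hrb : ∀ i, ρ i ≤ rb) {E : Set V} (hbdd : Bornology.IsBounded E) (hosc : OSC φ) :
    ∃ C : ℝ, ∀ n x b, rb ^ n ≤ b → 0 < b → b ≤ 1 → ((cutSetNear φ ρ E n x b).card : ℝ) ≤ C := by
  obtain ⟨U, ⟨u, hu⟩, hUo, hUinv, hUd⟩ := hosc
  obtain ⟨a, ha, hau⟩ := nhds_basis_closedBall.mem_iff.mp (hUo.mem_nhds hu)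
  obtain ⟨K, hK0, hEK⟩ := hbdd.subset_closedBall_lt 0 u
  obtain ⟨i₁, hi₁⟩ := Finite.exists_min ρ
  have hρ0 i : 0 < ρ i := (hρ i).1
  refine ⟨((a + K + 1) / (ρ i₁ * a)) ^ finrank ℝ V, fun n x b hfuel hb0 hb1 => ?_⟩
  set S := cutSetNear φ ρ E n x b
  have hcont w : Continuous (wordMap φ w) :=
    ((isSimilitude_wordMap hsim w).lipschitzWith (wordRatio_pos hρ0 w).le).continuous
  have hdisj : (S : Set (List ι)).PairwiseDisjoint fun v => wordMap φ v '' closedBall u a :=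
    ((pairwiseDisjoint_wordMap_image_cutSet (fun i => (hsim i).injective (hρ0 i)) hUinv hUd n b
      ).subset fun v hv => (mem_cutSetNear.mp hv).1).mono fun v => Set.image_mono hau
  have hsub : ∀ v ∈ S, wordMap φ v '' closedBall u a ⊆ closedBall x (b * (a + K + 1)) := by
    intro v hv
    obtain ⟨hvcut, _, ⟨e, he, rfl⟩, hex⟩ := mem_cutSetNear.mp hv
    exact wordMap_image_closedBall_subset hsim hb0.le
      (wordRatio_le_of_mem_cutSet hρ0 hrb hfuel v hvcut) (hEK he) hex
  have hvol : ∀ v ∈ S, volume (closedBall (0 : V) (b * ρ i₁ * a)) ≤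
      volume (wordMap φ v '' closedBall u a) := fun v hv => by
    rw [volume_wordMap_image_closedBall hρ0 hsim v u ha.le]
    refine measure_mono (closedBall_subset_closedBall (mul_le_mul_of_nonneg_right ?_ ha.le))
    exact mul_le_wordRatio_of_mem_cutSet hρ0 hi₁ (hρ0 i₁).le (hρ i₁).2.le hb0 hb1 v
      (mem_cutSetNear.mp hv).1
  have key := Measure.card_mul_pow_finrank_le volume S
    (fun v _ => ((isCompact_closedBall u a).image (hcont v)).isClosed.measurableSet) hdisj
    (mul_nonneg (mul_nonneg hb0.le (hρ0 i₁).le) ha.le) (mul_nonneg hb0.le (by linarith)) hsub hvol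
  rw [mul_pow, mul_pow, mul_pow] at key
  rw [div_pow, mul_pow, le_div_iff₀ (mul_pos (pow_pos (hρ0 i₁) _) (pow_pos ha _))]
  refine le_of_mul_le_mul_left ?_ (pow_pos hb0 (finrank ℝ V))
  linarith

end Counting

section Attractor

variable {ι : Type*} {ρ : ι → ℝ}

section InnerProductSpace

variable {V : Type*} [NormedAddCommGroup V] [InnerProductSpace ℝ V] [FiniteDimensional ℝ V]
  [MeasurableSpace V] [BorelSpace V] {φ : ι → V → V}

theorem hausdorffMeasure_pos_of_osc [Fintype ι] [DecidableEq ι] [Nonempty ι] [Nontrivial V]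
    (hρ : ∀ i, 0 < ρ i ∧ ρ i < 1) (hsim : ∀ i, IsSimilitude (φ i) (ρ i)) {E : Set V}
    (hE : IsAttractor φ E) (hosc : OSC φ) {s : ℝ} (hs : 0 ≤ s) (hsum : ∑ i, ρ i ^ s = 1) :
    0 < μH[s] E := by
  obtain ⟨i₀, hi₀⟩ := Finite.exists_max ρ
  obtain ⟨C, hC⟩ := exists_card_cutSetNear_le hρ hsim hi₀ hE.1.isBounded hosc
  refine lt_of_lt_of_le (ENNReal.ofReal_pos.mpr (inv_pos.mpr (by positivity)))
    (hE.1.le_hausdorffMeasure hs fun F W hWo hWne hcov => ofReal_inv_le_sum_ediam_rpow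
      (fun i => (hρ i).1) hi₀ (hρ i₀).2 hE.image_subset hE.2.1 hs hsum (le_max_right C 1)
      (fun n x b h1 h2 h3 => (hC n x b h1 h2 h3).trans (le_max_left _ _)) hWo hWne hcov)

end InnerProductSpace

section NormedSpace

variable {V : Type*} [NormedAddCommGroup V] [NormedSpace ℝ V] [MeasurableSpace V] [BorelSpace V]
  {φ : ι → V → V}

theorem hausdorffMeasure_wordMap_image_pos (hρ : ∀ i, 0 < ρ i)
    (hsim : ∀ i, IsSimilitude (φ i) (ρ i)) {s : ℝ} (hs : 0 ≤ s) {A : Set V} (hA : 0 < μH[s] A)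
    (w : List ι) : 0 < μH[s] (wordMap φ w '' A) := by
  rw [(isSimilitude_wordMap hsim w).hausdorffMeasure_image (wordRatio_pos hρ w) hs]
  exact ENNReal.mul_pos (ENNReal.ofReal_pos.mpr (Real.rpow_pos_of_pos (wordRatio_pos hρ w) s)).ne'
    hA.ne'

/-- The pieces `φ i '' E` have total measure `μH[s] E`, so they overlap only in null sets. -/
theorem hausdorffMeasure_image_inter_image_eq_zero [Fintype ι] [DecidableEq ι] (hρ : ∀ i, 0 < ρ i)
    (hsim : ∀ i, IsSimilitude (φ i) (ρ i)) {E : Set V} (hE : IsAttractor φ E) {s : ℝ} (hs : 0 ≤ s)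
    (hsum : ∑ i, ρ i ^ s = 1) (hfin : μH[s] E ≠ ⊤) {i j : ι} (hij : i ≠ j) :
    μH[s] (φ i '' E ∩ φ j '' E) = 0 := by
  refine measure_inter_eq_zero_of_sum_le (fun k => ?_) hE.2.2.le ?_ hfin hij
  · exact (hE.1.image ((hsim k).lipschitzWith (hρ k).le).continuous).isClosed.measurableSet
  · simp_rw [(hsim _).hausdorffMeasure_image (hρ _) hs, ← Finset.sum_mul,
      ← ENNReal.ofReal_sum_of_nonneg fun k _ => Real.rpow_nonneg (hρ k).le s, hsum,
      ENNReal.ofReal_one, one_mul, le_rfl]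

end NormedSpace

theorem exists_wordMap_image_subset_inter {X : Type*} [MetricSpace X] {φ : ι → X → X}
    (hinj : ∀ i, Function.Injective (φ i)) {E : Set X} (hE : ∀ i, φ i '' E ⊆ E) (hsep : SSC φ E)
    {S T : Finset (List ι)}
    (h : ((⋃ p ∈ S, wordMap φ p '' E) ∩ ⋃ q ∈ T, wordMap φ q '' E).Nonempty) :
    ∃ w, wordMap φ w '' E ⊆ (⋃ p ∈ S, wordMap φ p '' E) ∩ ⋃ q ∈ T, wordMap φ q '' E := by
  obtain ⟨x, hxS, hxT⟩ := h
  obtain ⟨p, hp, hxp⟩ := Set.mem_iUnion₂.mp hxS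
  obtain ⟨q, hq, hxq⟩ := Set.mem_iUnion₂.mp hxT
  have hpS := Set.subset_biUnion_of_mem (u := fun p => wordMap φ p '' E) hp
  have hqT := Set.subset_biUnion_of_mem (u := fun q => wordMap φ q '' E) hq
  by_cases hpq : p <+: q
  · exact ⟨q, Set.subset_inter ((wordMap_image_subset_of_prefix hE hpq).trans hpS) hqT⟩
  by_cases hqp : q <+: p
  · exact ⟨p, Set.subset_inter hpS ((wordMap_image_subset_of_prefix hE hqp).trans hqT)⟩
  exact absurd (disjoint_wordMap_image hinj hE hsep hpq hqp)
    (Set.not_disjoint_iff.mpr ⟨x, hxp, hxq⟩)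

end Attractor

end IFS

theorem ekm_implies_no_osc_without_ssc_general {d M : ℕ}
    (ψ : Fin M → Pt d → Pt d) (r : Fin M → ℝ)
    (hr : ∀ j, 0 < r j ∧ r j < 1) (hsim : ∀ j, IsSimilitude (ψ j) (r j))
    (E : Set (Pt d)) (hE : IsAttractor ψ E) (hSSC : SSC ψ E)
    (hpieces : ∀ f : Pt d → Pt d, (∃ ρ : ℝ, 0 < ρ ∧ IsSimilitude f ρ) → f '' E ⊆ E →
      ∃ S : Finset (List (Fin M)),
        f '' E = ⋃ l ∈ S, ((l.map ψ).foldr (· ∘ ·) id) '' E) :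
    ∀ (N : ℕ), 1 < N → ∀ (φ : Fin N → Pt d → Pt d) (ρ : Fin N → ℝ),
      (∀ i, 0 < ρ i ∧ ρ i < 1) → (∀ i, IsSimilitude (φ i) (ρ i)) →
      IsAttractor φ E → OSC φ → SSC φ E := by
  intro N hN φ ρ hρ hsimφ hEφ hosc i j hij
  have : Nontrivial (Fin N) := Fin.nontrivial_iff_two_le.mpr hN
  have : Nontrivial (Pt d) := hosc.nontrivial
  obtain ⟨s, hs, hsum⟩ := exists_sum_rpow_eq_one hρ
  have hpos := IFS.hausdorffMeasure_pos_of_osc hρ hsimφ hEφ hosc hs hsum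
  have hfin : μH[s] E ≠ ⊤ := ((IFS.hausdorffMeasure_le_ediam_rpow hρ hsimφ hEφ.1.isBounded
    hEφ.2.2.le hs hsum).trans_lt (ENNReal.rpow_lt_top_of_nonneg hs hEφ.1.isBounded.ediam_ne_top)).ne
  have hnull := IFS.hausdorffMeasure_image_inter_image_eq_zero (fun i => (hρ i).1) hsimφ hEφ hs hsum
    hfin hij
  rw [Set.disjoint_iff_inter_eq_empty, ← Set.not_nonempty_iff_eq_empty]
  intro hmeet
  obtain ⟨S, hS⟩ := hpieces (φ i) ⟨ρ i, (hρ i).1, hsimφ i⟩ (hEφ.image_subset i)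
  obtain ⟨T, hT⟩ := hpieces (φ j) ⟨ρ j, (hρ j).1, hsimφ j⟩ (hEφ.image_subset j)
  rw [hS, hT] at hmeet hnull
  obtain ⟨w, hw⟩ := IFS.exists_wordMap_image_subset_inter (fun j => (hsim j).injective (hr j).1)
    hE.image_subset hSSC hmeet
  exact (IFS.hausdorffMeasure_wordMap_image_pos (fun j => (hr j).1) hsim hs hpos w).ne'
    (measure_mono_null hw hnull)

theorem ekm_implies_no_osc_without_ssc {d M : ℕ} (hM : 1 < M)
    (ψ : Fin M → Pt d → Pt d) (r : Fin M → ℝ)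
    (hr : ∀ j, 0 < r j ∧ r j < 1) (hsim : ∀ j, IsSimilitude (ψ j) (r j))
    (E : Set (Pt d)) (hE : IsAttractor ψ E) (hSSC : SSC ψ E)
    (hpieces : ∀ f : Pt d → Pt d, (∃ ρ : ℝ, 0 < ρ ∧ IsSimilitude f ρ) → f '' E ⊆ E →
      ∃ S : Finset (List (Fin M)),
        f '' E = ⋃ l ∈ S, ((l.map ψ).foldr (· ∘ ·) id) '' E) :
    ∀ (N : ℕ), 1 < N → ∀ (φ : Fin N → Pt d → Pt d) (ρ : Fin N → ℝ),
      (∀ i, 0 < ρ i ∧ ρ i < 1) → (∀ i, IsSimilitude (φ i) (ρ i)) →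
      IsAttractor φ E → OSC φ → SSC φ E :=
  ekm_implies_no_osc_without_ssc_general ψ r hr hsim E hE hSSC hpieces
end
end
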